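/- Let U = Z·X where Z ∈ {0,1}^{N×K} is a classification matrix with class sizes N₁,...,N_K (all positive) and X ∈ ℝ^{K×K}, and suppose U^⊤U = I_K. Then all rows of U in the same class are identical, and for i in class k and j in class l with k ≠ l, ‖U(i,:) − U(j,:)‖₂ = √(1/N_k + 1/N_l). -/
import Mathlib


open scoped Matrix

theorem stmt_16 (N K : ℕ) (hK : 0 < K)
    (Z : Matrix (Fin N) (Fin K) ℝ)
    (hZ01 : ∀ i k, Z i k = 0 ∨ Z i k = 1)
    (hrow : ∀ i, ∃! k, Z i k = 1)
    (Nk : Fin K → ℕ)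
    (hNk : ∀ k, Nk k = (Finset.univ.filter (fun i => Z i k = 1)).card)
    (hNkpos : ∀ k, 0 < Nk k)
    (X : Matrix (Fin K) (Fin K) ℝ)
    (U : Matrix (Fin N) (Fin K) ℝ) (hU : U = Z * X)
    (horth : Uᵀ * U = 1) :
    (∀ i j : Fin N, ∀ k : Fin K, Z i k = 1 → Z j k = 1 → U i = U j) ∧
    (∀ i j : Fin N, ∀ k l : Fin K, k ≠ l → Z i k = 1 → Z j l = 1 →
      Real.sqrt (∑ c, (U i c - U j c) ^ 2) =
        Real.sqrt (1 / (Nk k : ℝ) + 1 / (Nk l : ℝ))) := by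
  have hrowU : ∀ i k, Z i k = 1 → U i = X k := by
    intro i k hik
    funext c
    rw [hU]
    show ∑ m, Z i m * X m c = X k c
    rw [Finset.sum_eq_single k]
    · rw [hik, one_mul]
    · intro m _ hm
      rcases hZ01 i m with h0 | h1
      · rw [h0, zero_mul]
      · exact absurd ((hrow i).unique h1 hik) hm
    · intro h; exact absurd (Finset.mem_univ k) h
  have hZZ : Zᵀ * Z = Matrix.diagonal (fun k => (Nk k : ℝ)) := by
    ext k l
    simp only [Matrix.mul_apply, Matrix.transpose_apply, Matrix.diagonal]
    by_cases hkl : k = l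
    · subst hkl
      simp only [Matrix.of_apply, if_pos rfl]
      rw [hNk k, Finset.card_filter]
      push_cast
      apply Finset.sum_congr rfl
      intro i _
      rcases hZ01 i k with h | h <;> simp [h]
    · simp only [Matrix.of_apply, if_neg hkl]
      apply Finset.sum_eq_zero
      intro i _
      rcases hZ01 i k with h | h
      · rw [h, zero_mul]
      · rcases hZ01 i l with h' | h'
        · rw [h', mul_zero]
        · exact absurd ((hrow i).unique h h') hkl
  have hXDX : Xᵀ * (Matrix.diagonal (fun k => (Nk k : ℝ)) * X) = 1 := by
    rw [← hZZ, ← Matrix.mul_assoc, ← Matrix.mul_assoc, ← Matrix.transpose_mul, ← hU,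
      Matrix.mul_assoc, ← hU, horth]
  set s : Fin K → ℝ := fun k => Real.sqrt (Nk k) with hs
  have hspos : ∀ k, 0 < s k := fun k =>
    Real.sqrt_pos.mpr (by exact_mod_cast hNkpos k)
  have hss : ∀ k, s k * s k = (Nk k : ℝ) := fun k =>
    Real.mul_self_sqrt (by positivity)
  set Q : Matrix (Fin K) (Fin K) ℝ := Matrix.diagonal s * X with hQ
  have hQQ : Qᵀ * Q = 1 := by
    rw [hQ, Matrix.transpose_mul, Matrix.diagonal_transpose, Matrix.mul_assoc,
      ← Matrix.mul_assoc (Matrix.diagonal s), Matrix.diagonal_mul_diagonal]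
    have : (fun k => s k * s k) = fun k => (Nk k : ℝ) := funext hss
    rw [this, ← Matrix.mul_assoc, Matrix.mul_assoc, hXDX]
  have hQQ' : Q * Qᵀ = 1 := mul_eq_one_comm.mp hQQ
  have hXXT : ∀ k l : Fin K, (∑ c, X k c * X l c) =
      if k = l then 1 / (Nk k : ℝ) else 0 := by
    intro k l
    have hq : ∀ a b, Q a b = s a * X a b := by
      intro a b; rw [hQ, Matrix.diagonal_mul]
    have h' : s k * s l * (∑ c, X k c * X l c) = if k = l then 1 else 0 := by
      have h := congrFun (congrFun hQQ' k) l
      rw [Matrix.mul_apply] at h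
      simp only [Matrix.transpose_apply, hq, Matrix.one_apply] at h
      rw [Finset.mul_sum, ← h]
      apply Finset.sum_congr rfl
      intro c _
      ring
    by_cases hkl : k = l
    · subst hkl
      rw [if_pos rfl] at h' ⊢
      have hN : (Nk k : ℝ) ≠ 0 := by
        exact_mod_cast (hNkpos k).ne'
      rw [hss k] at h'
      rw [eq_div_iff hN]
      linarith [h']
    · rw [if_neg hkl] at h' ⊢
      have := mul_ne_zero (ne_of_gt (hspos k)) (ne_of_gt (hspos l))
      exact (mul_eq_zero.mp h').resolve_left this
  constructor
  · intro i j k hik hjk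
    rw [hrowU i k hik, hrowU j k hjk]
  · intro i j k l hkl hik hjl
    rw [hrowU i k hik, hrowU j l hjl]
    congr 1
    have e1 := hXXT k k
    have e2 := hXXT l l
    have e3 := hXXT k l
    rw [if_pos rfl] at e1 e2
    rw [if_neg hkl] at e3
    calc ∑ c, (X k c - X l c) ^ 2
        = (∑ c, X k c * X k c) - 2 * (∑ c, X k c * X l c)
          + (∑ c, X l c * X l c) := by
          rw [Finset.mul_sum, ← Finset.sum_sub_distrib, ← Finset.sum_add_distrib]
          apply Finset.sum_congr rfl
          intro c _; ring
      _ = 1 / (Nk k : ℝ) + 1 / (Nk l : ℝ) := by rw [e1, e2, e3]; ring
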